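/- (Mutual information through independent M-ary erasure channels.) Let X_i, X_j be discrete random variables taking values in [M], and let Y_i, Y_j be outputs of independent erasure channels: Y_i = X_i with probability 1 − q_i and Y_i = M+1 (an erasure symbol) with probability q_i, where the erasure events at the two coordinates are independent of each other and of (X_i, X_j), and q_i, q_j ∈ [0, 1]. Then I(Y_i; Y_j) = (1 − q_i)(1 − q_j) I(X_i; X_j). -/
import Mathlib


open scoped Classical

noncomputable section

namespace NoisyChannels

/-- Shannon entropy (base 2) of a pmf on a finite alphabet,
with the convention `0 · log 0 = 0`. -/
def entF {α : Type*} [Fintype α] (f : α → ℝ) : ℝ :=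
  -∑ a, f a * Real.logb 2 (f a)

/-- Left marginal of a joint pmf. -/
def margL {α β : Type*} [Fintype β] (f : α × β → ℝ) : α → ℝ :=
  fun a => ∑ b, f (a, b)

/-- Right marginal of a joint pmf. -/
def margR {α β : Type*} [Fintype α] (f : α × β → ℝ) : β → ℝ :=
  fun b => ∑ a, f (a, b)

/-- Mutual information (base 2) of the pair with joint pmf `f`:
`I(X; Y) = H(X) + H(Y) − H(X, Y)`. -/
def miF {α β : Type*} [Fintype α] [Fintype β] (f : α × β → ℝ) : ℝ :=
  entF (margL f) + entF (margR f) - entF f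

/-- `f` is a pmf on a finite alphabet. -/
def IsPmfF {α : Type*} [Fintype α] (f : α → ℝ) : Prop :=
  (∀ a, 0 ≤ f a) ∧ ∑ a, f a = 1

/-- Probability mass of the Bernoulli random indicator with success probability `q`. -/
def bern (q : ℝ) : Bool → ℝ := fun b => if b then q else 1 - q

/-- The joint pmf of the outputs `(Y_i, Y_j)` of two independent erasure channels
with erasure probabilities `qi, qj`, applied to the pair of inputs `(X_i, X_j)`
with joint pmf `pXX`:  each coordinate is independently erased (replaced by the
erasure symbol `none`) with its own probability, independently of the inputs. -/
def eraseOut (M : ℕ) (qi qj : ℝ) (pXX : Fin M × Fin M → ℝ) :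
    Option (Fin M) × Option (Fin M) → ℝ :=
  fun y => ∑ x : Fin M × Fin M, ∑ b : Bool × Bool,
    pXX x * bern qi b.1 * bern qj b.2 *
      (if ((if b.1 then none else some x.1), (if b.2 then none else some x.2)) = y
        then 1 else 0)

private lemma h_mul (c x : ℝ) (hc : 0 ≤ c) (hx : 0 ≤ x) :
    (c * x) * Real.logb 2 (c * x)
      = c * (x * Real.logb 2 x) + x * (c * Real.logb 2 c) := by
  rcases eq_or_lt_of_le hc with rfl | hc
  · simp
  rcases eq_or_lt_of_le hx with rfl | hx
  · simp
  rw [Real.logb_mul (ne_of_gt hc) (ne_of_gt hx)]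
  ring

private lemma sum_h_scale {α : Type*} [Fintype α] (c : ℝ) (g : α → ℝ)
    (hc : 0 ≤ c) (hg : ∀ a, 0 ≤ g a) :
    ∑ a, (c * g a) * Real.logb 2 (c * g a)
      = c * ∑ a, g a * Real.logb 2 (g a)
        + (∑ a, g a) * (c * Real.logb 2 c) := by
  rw [Finset.mul_sum, Finset.sum_mul, ← Finset.sum_add_distrib]
  exact Finset.sum_congr rfl fun a _ => h_mul c (g a) hc (hg a)

/-- **Mutual information through independent M-ary erasure channels.**
If `Y_i, Y_j` are the outputs of independent erasure channels with erasure
probabilities `q_i, q_j ∈ [0, 1]` applied to `X_i, X_j`, then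
`I(Y_i; Y_j) = (1 − q_i)(1 − q_j) · I(X_i; X_j)`. -/
theorem mi_through_erasure_channels
    (M : ℕ) (hM : 0 < M) (qi qj : ℝ)
    (hqi : qi ∈ Set.Icc (0 : ℝ) 1) (hqj : qj ∈ Set.Icc (0 : ℝ) 1)
    (pXX : Fin M × Fin M → ℝ) (hp : IsPmfF pXX) :
    miF (eraseOut M qi qj pXX) = (1 - qi) * (1 - qj) * miF pXX := by
  obtain ⟨hp0, hp1⟩ := hp
  obtain ⟨hqi0, hqi1⟩ := hqi
  obtain ⟨hqj0, hqj1⟩ := hqj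
  have hA : (0:ℝ) ≤ 1 - qi := by linarith
  have hB : (0:ℝ) ≤ 1 - qj := by linarith
  have hpL0 : ∀ a, 0 ≤ margL pXX a := fun a => Finset.sum_nonneg fun b _ => hp0 _
  have hpR0 : ∀ b, 0 ≤ margR pXX b := fun b => Finset.sum_nonneg fun a _ => hp0 _
  have hpLsum : ∑ a, margL pXX a = 1 := by
    rw [show (∑ a, margL pXX a) = ∑ x : Fin M × Fin M, pXX x from
      (Fintype.sum_prod_type pXX).symm, hp1]
  have hpRsum : ∑ b, margR pXX b = 1 := by
    rw [show (∑ b, margR pXX b) = ∑ x : Fin M × Fin M, pXX x from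
      (Fintype.sum_prod_type_right pXX).symm, hp1]
  -- values of the output pmf
  have hss : ∀ a b : Fin M, eraseOut M qi qj pXX (some a, some b)
      = ((1-qi)*(1-qj))*pXX (a,b) := by
    intro a b
    simp only [eraseOut, bern, Fintype.sum_prod_type, Fintype.sum_bool]
    simp [Prod.ext_iff, mul_ite, ite_and, Finset.sum_ite_eq']
    ring
  have hsn : ∀ a : Fin M, eraseOut M qi qj pXX (some a, none)
      = ((1-qi)*qj)* margL pXX a := by
    intro a
    have : eraseOut M qi qj pXX (some a, none) = (1-qi)*(qj* margL pXX a) := by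
      simp only [eraseOut, bern, Fintype.sum_prod_type, Fintype.sum_bool]
      simp only [Prod.ext_iff, mul_ite, ite_and, Finset.sum_ite_eq', margL]
      simp [Finset.mul_sum, ← Finset.sum_add_distrib]
      exact Finset.sum_congr rfl fun b _ => by ring
    rw [this]; ring
  have hns : ∀ b : Fin M, eraseOut M qi qj pXX (none, some b)
      = (qi*(1-qj))* margR pXX b := by
    intro b
    have : eraseOut M qi qj pXX (none, some b) = qi*((1-qj)* margR pXX b) := by
      simp only [eraseOut, bern, Fintype.sum_prod_type, Fintype.sum_bool]
      simp only [Prod.ext_iff, mul_ite, ite_and, Finset.sum_ite_eq', margR]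
      simp [Finset.mul_sum, ← Finset.sum_add_distrib]
      exact Finset.sum_congr rfl fun a _ => by ring
    rw [this]; ring
  have hnn : eraseOut M qi qj pXX (none, none) = qi*qj := by
    simp only [eraseOut, bern, Fintype.sum_prod_type, Fintype.sum_bool]
    simp [← Finset.sum_mul, ← Fintype.sum_prod_type, hp1]
  set F := eraseOut M qi qj pXX with hF
  -- marginals of the output pmf
  have hmLs : ∀ a : Fin M, margL F (some a) = (1-qi) * margL pXX a := by
    intro a
    have h0 : margL F (some a) = F (some a, none) + ∑ b, F (some a, some b) :=
      Fintype.sum_option _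
    have e1 : ∑ b : Fin M, F (some a, some b) = ((1-qi)*(1-qj)) * margL pXX a := by
      rw [show (∑ b : Fin M, F (some a, some b))
          = ∑ b : Fin M, ((1-qi)*(1-qj))*pXX (a,b) from
        Finset.sum_congr rfl fun b _ => hss a b, ← Finset.mul_sum]
      rfl
    rw [h0, e1, hsn]; ring
  have hmLn : margL F none = qi := by
    have h0 : margL F none = F (none, none) + ∑ b, F (none, some b) :=
      Fintype.sum_option _
    have e1 : ∑ b : Fin M, F (none, some b) = qi*(1-qj) := by
      rw [show (∑ b : Fin M, F (none, some b))
          = ∑ b : Fin M, (qi*(1-qj))* margR pXX b from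
        Finset.sum_congr rfl fun b _ => hns b, ← Finset.mul_sum, hpRsum, mul_one]
    rw [h0, e1, hnn]; ring
  have hmRs : ∀ b : Fin M, margR F (some b) = (1-qj) * margR pXX b := by
    intro b
    have h0 : margR F (some b) = F (none, some b) + ∑ a, F (some a, some b) :=
      Fintype.sum_option _
    have e1 : ∑ a : Fin M, F (some a, some b) = ((1-qi)*(1-qj)) * margR pXX b := by
      rw [show (∑ a : Fin M, F (some a, some b))
          = ∑ a : Fin M, ((1-qi)*(1-qj))*pXX (a,b) from
        Finset.sum_congr rfl fun a _ => hss a b, ← Finset.mul_sum]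
      rfl
    rw [h0, e1, hns]; ring
  have hmRn : margR F none = qj := by
    have h0 : margR F none = F (none, none) + ∑ a, F (some a, none) :=
      Fintype.sum_option _
    have e1 : ∑ a : Fin M, F (some a, none) = (1-qi)*qj := by
      rw [show (∑ a : Fin M, F (some a, none))
          = ∑ a : Fin M, ((1-qi)*qj)* margL pXX a from
        Finset.sum_congr rfl fun a _ => hsn a, ← Finset.mul_sum, hpLsum, mul_one]
    rw [h0, e1, hnn]; ring
  -- entropy sums
  have TL : ∑ o : Option (Fin M), margL F o * Real.logb 2 (margL F o)
      = qi * Real.logb 2 qi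
        + ((1-qi) * ∑ a, margL pXX a * Real.logb 2 (margL pXX a)
            + (1-qi) * Real.logb 2 (1-qi)) := by
    rw [Fintype.sum_option, hmLn]
    congr 1
    rw [show (∑ a : Fin M, margL F (some a) * Real.logb 2 (margL F (some a)))
        = ∑ a : Fin M, ((1-qi) * margL pXX a) * Real.logb 2 ((1-qi) * margL pXX a) from
      Finset.sum_congr rfl fun a _ => by rw [hmLs a],
      sum_h_scale _ _ hA hpL0, hpLsum, one_mul]
  have TR : ∑ o : Option (Fin M), margR F o * Real.logb 2 (margR F o)
      = qj * Real.logb 2 qj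
        + ((1-qj) * ∑ b, margR pXX b * Real.logb 2 (margR pXX b)
            + (1-qj) * Real.logb 2 (1-qj)) := by
    rw [Fintype.sum_option, hmRn]
    congr 1
    rw [show (∑ b : Fin M, margR F (some b) * Real.logb 2 (margR F (some b)))
        = ∑ b : Fin M, ((1-qj) * margR pXX b) * Real.logb 2 ((1-qj) * margR pXX b) from
      Finset.sum_congr rfl fun b _ => by rw [hmRs b],
      sum_h_scale _ _ hB hpR0, hpRsum, one_mul]
  -- joint entropy sum of the output
  have t3 : ∑ x : Fin M × Fin M, F (some x.1, some x.2) * Real.logb 2 (F (some x.1, some x.2))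
      = ((1-qi)*(1-qj)) * ∑ x, pXX x * Real.logb 2 (pXX x)
        + ((1-qi)*(1-qj)) * Real.logb 2 ((1-qi)*(1-qj)) := by
    rw [show (∑ x : Fin M × Fin M, F (some x.1, some x.2) * Real.logb 2 (F (some x.1, some x.2)))
        = ∑ x : Fin M × Fin M,
            (((1-qi)*(1-qj)) * pXX x) * Real.logb 2 (((1-qi)*(1-qj)) * pXX x) from
      Finset.sum_congr rfl fun x _ => by rw [hss x.1 x.2, Prod.mk.eta],
      sum_h_scale _ _ (mul_nonneg hA hB) hp0, hp1, one_mul]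
  have t1 : ∑ b : Fin M, F (none, some b) * Real.logb 2 (F (none, some b))
      = (qi*(1-qj)) * ∑ b, margR pXX b * Real.logb 2 (margR pXX b)
        + (qi*(1-qj)) * Real.logb 2 (qi*(1-qj)) := by
    rw [show (∑ b : Fin M, F (none, some b) * Real.logb 2 (F (none, some b)))
        = ∑ b : Fin M, ((qi*(1-qj)) * margR pXX b) * Real.logb 2 ((qi*(1-qj)) * margR pXX b)
        from Finset.sum_congr rfl fun b _ => by rw [hns b],
      sum_h_scale _ _ (mul_nonneg hqi0 hB) hpR0, hpRsum, one_mul]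
  have t2 : ∑ a : Fin M, F (some a, none) * Real.logb 2 (F (some a, none))
      = ((1-qi)*qj) * ∑ a, margL pXX a * Real.logb 2 (margL pXX a)
        + ((1-qi)*qj) * Real.logb 2 ((1-qi)*qj) := by
    rw [show (∑ a : Fin M, F (some a, none) * Real.logb 2 (F (some a, none)))
        = ∑ a : Fin M, (((1-qi)*qj) * margL pXX a) * Real.logb 2 (((1-qi)*qj) * margL pXX a)
        from Finset.sum_congr rfl fun a _ => by rw [hsn a],
      sum_h_scale _ _ (mul_nonneg hA hqj0) hpL0, hpLsum, one_mul]
  have TJ : ∑ y : Option (Fin M) × Option (Fin M), F y * Real.logb 2 (F y)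
      = (qi*qj) * Real.logb 2 (qi*qj)
        + ((qi*(1-qj)) * ∑ b, margR pXX b * Real.logb 2 (margR pXX b)
            + (qi*(1-qj)) * Real.logb 2 (qi*(1-qj)))
        + (((1-qi)*qj) * ∑ a, margL pXX a * Real.logb 2 (margL pXX a)
            + ((1-qi)*qj) * Real.logb 2 ((1-qi)*qj))
        + (((1-qi)*(1-qj)) * ∑ x, pXX x * Real.logb 2 (pXX x)
            + ((1-qi)*(1-qj)) * Real.logb 2 ((1-qi)*(1-qj))) := by
    rw [Fintype.sum_prod_type, Fintype.sum_option,
      Fintype.sum_option (fun o => F (none, o) * Real.logb 2 (F (none, o))), hnn]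
    have expand : ∀ a : Fin M,
        (∑ o : Option (Fin M), F (some a, o) * Real.logb 2 (F (some a, o)))
          = F (some a, none) * Real.logb 2 (F (some a, none))
            + ∑ b : Fin M, F (some a, some b) * Real.logb 2 (F (some a, some b)) :=
      fun a => Fintype.sum_option _
    rw [Finset.sum_congr rfl fun a _ => expand a, Finset.sum_add_distrib,
      t1, t2, ← Fintype.sum_prod_type
        (fun x : Fin M × Fin M => F (some x.1, some x.2) * Real.logb 2 (F (some x.1, some x.2))),
      t3]
    ring
  -- split the mixed log terms and conclude
  have s1 : (qi*qj) * Real.logb 2 (qi*qj)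
      = qi*(qj * Real.logb 2 qj) + qj*(qi * Real.logb 2 qi) := h_mul qi qj hqi0 hqj0
  have s2 : (qi*(1-qj)) * Real.logb 2 (qi*(1-qj))
      = qi*((1-qj) * Real.logb 2 (1-qj)) + (1-qj)*(qi * Real.logb 2 qi) :=
    h_mul qi (1-qj) hqi0 hB
  have s3 : ((1-qi)*qj) * Real.logb 2 ((1-qi)*qj)
      = (1-qi)*(qj * Real.logb 2 qj) + qj*((1-qi) * Real.logb 2 (1-qi)) :=
    h_mul (1-qi) qj hA hqj0
  have s4 : ((1-qi)*(1-qj)) * Real.logb 2 ((1-qi)*(1-qj))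
      = (1-qi)*((1-qj) * Real.logb 2 (1-qj)) + (1-qj)*((1-qi) * Real.logb 2 (1-qi)) :=
    h_mul (1-qi) (1-qj) hA hB
  simp only [miF, entF]
  rw [TL, TR, TJ, s1, s2, s3, s4]
  ring


end NoisyChannels
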